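/- With K = K_maxcount (with β = 1) and d the Euclidean distance on ℝ, the natural distance D_nat is not a metric: for M ≥ 2, there exist configurations A, B, C with m = 2 trajectories of length T = 3 taking values in ℝ (no * entries) such that D_nat(A, C) > D_nat(A, B) + D_nat(B, C), i.e. the triangle inequality fails. -/

import Mathlib

/-!
Place two particles at the sites `0` and `2M`. In `A` they stay put, in `B` they swap once,
in `C` they swap and swap back. Matching `A` with `B`, or `B` with `C`, costs one switch and no
displacement, so both distances are at most `1`. Matching `A` with `C` exactly needs two switches,
which `K_maxcount` (with `β = 1`) prices at `∞`; any admissible matching therefore pairs the two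
sites wrongly at some time, which costs at least `2M > 2`.
-/

open scoped ENNReal

/-- The extended distance `d⁺` on `X⁺ = X ∪ {*}`, modeled as `Option X`. -/
noncomputable def dplus {X : Type*} [MetricSpace X] (M : ℝ) : Option X → Option X → ℝ
  | some a, some b => min (2 * M) (dist a b)
  | some _, none => M
  | none, some _ => M
  | none, none => 0

/-- `K_count(Σ) = ∑_{t=1}^{T−1} 𝟙{σ(t+1) ∘ σ(t)⁻¹ ≠ id}` (number of switches). -/
def KcountN {m T : ℕ} (S : Fin T → Equiv.Perm (Fin m)) : ℕ :=
  ∑ t : Fin (T - 1),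
    (if S ⟨t.1 + 1, by have := t.2; omega⟩ * (S ⟨t.1, by have := t.2; omega⟩)⁻¹ ≠ 1
     then 1 else 0)

/-- `K_maxcount(Σ) = K_count(Σ)` if `K_count(Σ) ≤ β`, and `∞` otherwise. -/
noncomputable def Kmaxcount (β : ℝ) {m T : ℕ} (S : Fin T → Equiv.Perm (Fin m)) : ℝ≥0∞ :=
  if (KcountN S : ℝ) ≤ β then (KcountN S : ℝ≥0∞) else ∞

/-- The natural distance `D_nat(A,B)` with switching cost `K`. -/
noncomputable def Dnat {X : Type*} [MetricSpace X] (M : ℝ) {m T : ℕ}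
    (K : (Fin T → Equiv.Perm (Fin m)) → ℝ≥0∞)
    (A B : Fin m → Fin T → Option X) : ℝ≥0∞ :=
  ⨅ S : Fin T → Equiv.Perm (Fin m),
    K S + ENNReal.ofReal (∑ t, ∑ i, dplus M (A i t) (B (S t i) t))

open Equiv

section

variable {X : Type*} [MetricSpace X] {M : ℝ}

lemma dplus_self (hM : 0 ≤ M) (x : Option X) : dplus M x x = 0 := by
  cases x <;> simp [dplus, hM]

lemma dplus_nonneg (hM : 0 ≤ M) (x y : Option X) : 0 ≤ dplus M x y := by
  cases x <;> cases y <;> simp [dplus, hM, dist_nonneg]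

end

lemma KcountN_fin_three {m : ℕ} (S : Fin 3 → Perm (Fin m)) :
    KcountN S = (if S 1 ≠ S 0 then 1 else 0) + (if S 2 ≠ S 1 then 1 else 0) := by
  simp [KcountN, Fin.sum_univ_two, mul_inv_eq_one]

lemma Kmaxcount_of_le {β : ℝ} {m T : ℕ} {S : Fin T → Perm (Fin m)} (h : (KcountN S : ℝ) ≤ β) :
    Kmaxcount β S = KcountN S :=
  if_pos h

def siteConfig {X : Type*} {m T : ℕ} (pos : Fin m → Option X) (π : Fin T → Perm (Fin m)) :
    Fin m → Fin T → Option X :=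
  fun i t => pos (π t i)

lemma siteConfig_ne_none {X : Type*} {m T : ℕ} {pos : Fin m → Option X}
    {π : Fin T → Perm (Fin m)} (hpos : ∀ a, pos a ≠ none) (i : Fin m) (t : Fin T) :
    siteConfig pos π i t ≠ none :=
  hpos _

section SiteConfig

variable {X : Type*} [MetricSpace X] {M : ℝ} {m T : ℕ} {pos : Fin m → Option X}
  {π ρ : Fin T → Perm (Fin m)} {K : (Fin T → Perm (Fin m)) → ℝ≥0∞}

lemma Dnat_siteConfig_le (hM : 0 ≤ M) {S : Fin T → Perm (Fin m)} (hS : ∀ t, ρ t * S t = π t) :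
    Dnat M K (siteConfig pos π) (siteConfig pos ρ) ≤ K S := by
  have hcost : ∑ t, ∑ i, dplus M (siteConfig pos π i t) (siteConfig pos ρ (S t i) t) = 0 := by
    refine Finset.sum_eq_zero fun t _ => Finset.sum_eq_zero fun i _ => ?_
    simp only [siteConfig, ← Perm.mul_apply, hS, dplus_self hM]
  calc Dnat M K (siteConfig pos π) (siteConfig pos ρ)
      ≤ K S + ENNReal.ofReal (∑ t, ∑ i,
          dplus M (siteConfig pos π i t) (siteConfig pos ρ (S t i) t)) := iInf_le _ S
    _ = K S := by rw [hcost, ENNReal.ofReal_zero, add_zero]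

lemma ofReal_le_Dnat_siteConfig (hM : 0 ≤ M) {δ : ℝ}
    (hpos : ∀ a b, a ≠ b → δ ≤ dplus M (pos a) (pos b))
    (hK : ∀ S, (∀ t, ρ t * S t = π t) → K S = ∞) :
    ENNReal.ofReal δ ≤ Dnat M K (siteConfig pos π) (siteConfig pos ρ) := by
  refine le_iInf fun S => ?_
  by_cases hS : ∀ t, ρ t * S t = π t
  · simp [hK S hS]
  obtain ⟨t, ht⟩ := not_forall.mp hS
  obtain ⟨i, hi⟩ : ∃ i, ρ t (S t i) ≠ π t i := by
    by_contra! h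
    exact ht (Perm.ext h)
  set c : Fin T → Fin m → ℝ := fun t i =>
    dplus M (siteConfig pos π i t) (siteConfig pos ρ (S t i) t)
  have hc : ∀ t i, 0 ≤ c t i := fun t i => dplus_nonneg hM _ _
  have hsum : δ ≤ ∑ t, ∑ i, c t i :=
    calc δ ≤ c t i := hpos _ _ (Ne.symm hi)
      _ ≤ ∑ i, c t i := Finset.single_le_sum (fun i _ => hc t i) (Finset.mem_univ i)
      _ ≤ ∑ t, ∑ i, c t i := Finset.single_le_sum (f := fun t => ∑ i, c t i)
          (fun t _ => Finset.sum_nonneg fun i _ => hc t i) (Finset.mem_univ t)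
  exact (ENNReal.ofReal_le_ofReal hsum).trans le_add_self

end SiteConfig

/-- With `K = K_maxcount` (with `β = 1`) and `d` the Euclidean distance on `ℝ`, the
natural distance `D_nat` is not a metric: for `M ≥ 2` there exist configurations
`A, B, C` with `m = 2` trajectories of length `T = 3` taking values in `ℝ` (no `*`
entries) such that `D_nat(A,C) > D_nat(A,B) + D_nat(B,C)`. -/
theorem Dnat_Kmaxcount_not_metric (M : ℝ) (hM : 2 ≤ M) :
    ∃ A B C : Fin 2 → Fin 3 → Option ℝ,
      (∀ i t, A i t ≠ none) ∧ (∀ i t, B i t ≠ none) ∧ (∀ i t, C i t ≠ none) ∧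
      Dnat M (Kmaxcount 1) A B + Dnat M (Kmaxcount 1) B C
        < Dnat M (Kmaxcount 1) A C := by
  have hM0 : 0 ≤ M := by linarith
  set w : Perm (Fin 2) := swap 0 1
  set pos : Fin 2 → Option ℝ := ![some 0, some (2 * M)]
  have hpos : ∀ a b, a ≠ b → 2 * M ≤ dplus M (pos a) (pos b) := by
    intro a b hab
    fin_cases a <;> fin_cases b <;> simp_all [pos, dplus, Real.dist_eq, abs_of_nonneg hM0]
  have hsome : ∀ a, pos a ≠ none := by simp [Fin.forall_fin_two, pos]
  refine ⟨siteConfig pos ![1, 1, 1], siteConfig pos ![1, 1, w], siteConfig pos ![1, w, 1],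
    siteConfig_ne_none hsome, siteConfig_ne_none hsome, siteConfig_ne_none hsome, ?_⟩
  have hAB : Dnat M (Kmaxcount 1) (siteConfig pos ![1, 1, 1]) (siteConfig pos ![1, 1, w]) ≤ 1 :=
    (Dnat_siteConfig_le hM0 (S := ![1, 1, w]) (by decide)).trans_eq
      (by rw [Kmaxcount_of_le] <;> simp [KcountN_fin_three, w])
  have hBC : Dnat M (Kmaxcount 1) (siteConfig pos ![1, 1, w]) (siteConfig pos ![1, w, 1]) ≤ 1 :=
    (Dnat_siteConfig_le hM0 (S := ![1, w, w]) (by decide)).trans_eq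
      (by rw [Kmaxcount_of_le] <;> simp [KcountN_fin_three, w])
  have hAC : ENNReal.ofReal (2 * M) ≤
      Dnat M (Kmaxcount 1) (siteConfig pos ![1, 1, 1]) (siteConfig pos ![1, w, 1]) := by
    refine ofReal_le_Dnat_siteConfig hM0 hpos fun S hS => if_neg ?_
    have hcount : KcountN S = 2 := by
      rw [KcountN_fin_three, eq_inv_mul_of_mul_eq (hS 0), eq_inv_mul_of_mul_eq (hS 1),
        eq_inv_mul_of_mul_eq (hS 2)]
      decide
    norm_num [hcount]
  calc _ ≤ (1 + 1 : ℝ≥0∞) := add_le_add hAB hBC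
    _ < ENNReal.ofReal (2 * M) := by
      rw [show (1 + 1 : ℝ≥0∞) = ENNReal.ofReal 2 by norm_num]
      exact (ENNReal.ofReal_lt_ofReal_iff (by linarith)).mpr (by linarith)
    _ ≤ _ := hAC
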